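/- arXiv:2311.13969 — 3 statements merged into one kernel-verified Lean document; each statement's English description precedes it below -/
import Mathlib

section
/- Under Assumptions (A1)-(A4), for every y < γ_C, every v in the support interval 𝒫 of the propensity score, and every δ > 0 such that y+δ lies in the support of C, the conditional joint probability of the observed outcome and treatment satisfies ℙ[Y ≤ y, D = 1 | P(Z,C) = v, C = y+δ] = ∫₀^v ℙ[Y*(1) ≤ y | C = y+δ, V = u] du (for almost every such conditioning value with respect to the distribution of (P(Z,C), C)). -/
/-!
On `{C = c}` with `c > y`, censoring cannot push the observed outcome below `y`, so the event
`{Y ≤ y, D = 1}` is `{V ≤ P(Z,C), Y*(1) ≤ y}`. By (A1), conditioning `(V, Y*(1))` on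
`(P(Z,C), C)` is the same as conditioning it on `C` alone, and that conditional law disintegrates
as the law of `V` given `C`, uniform by (A3), followed by the law of `Y*(1)` given `(C, V)`.
Evaluated on `{V ≤ v, Y*(1) ≤ y}` this is `∫₀^v ℙ[Y*(1) ≤ y ∣ C = c, V = u] du`.
-/

open MeasureTheory ProbabilityTheory Set
open scoped ENNReal

noncomputable section

/-- `γ_C := inf {c : ℙ[C ≤ c] = 1}`, the least upper bound of the support of the
censoring variable, as an extended nonnegative real. -/
def gammaSup {Ω : Type*} [MeasurableSpace Ω] (μ : Measure Ω) (C : Ω → ℝ) : ℝ≥0∞ :=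
  sInf {c : ℝ≥0∞ | μ {ω | ENNReal.ofReal (C ω) ≤ c} = 1}

namespace ProbabilityTheory

variable {Ω 𝓧 𝓨 𝓩 : Type*} {mΩ : MeasurableSpace Ω} {m𝓧 : MeasurableSpace 𝓧}
  {m𝓨 : MeasurableSpace 𝓨} {m𝓩 : MeasurableSpace 𝓩} {μ : Measure Ω}
  {X : Ω → 𝓧} {Y : Ω → 𝓨}

lemma hasCondDistrib_condDistrib [IsFiniteMeasure μ] [StandardBorelSpace 𝓨] [Nonempty 𝓨]
    (hX : AEMeasurable X μ) (hY : AEMeasurable Y μ) :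
    HasCondDistrib Y X (condDistrib Y X μ) μ :=
  ⟨hX.prodMk hY, (compProd_map_condDistrib hY).symm⟩

lemma HasCondDistrib.compProd {κ : Kernel 𝓧 𝓨} {Z : Ω → 𝓩} {η : Kernel (𝓧 × 𝓨) 𝓩}
    (hY : HasCondDistrib Y X κ μ) (hZ : HasCondDistrib Z (fun ω ↦ (X ω, Y ω)) η μ) :
    HasCondDistrib (fun ω ↦ (Y ω, Z ω)) X (κ ⊗ₖ η) μ where
  aemeasurable := hY.aemeasurable_fst.prodMk (hY.aemeasurable_snd.prodMk hZ.aemeasurable_snd)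
  map_eq := by
    rw [← Measure.compProd_assoc', ← hY.map_eq, ← hZ.map_eq,
      AEMeasurable.map_map_of_aemeasurable (by fun_prop) hZ.aemeasurable]
    rfl

lemma CondIndepFun.hasCondDistrib_prodMkRight [StandardBorelSpace Ω] [IsFiniteMeasure μ]
    [StandardBorelSpace 𝓨] [Nonempty 𝓨] [StandardBorelSpace 𝓩] [Nonempty 𝓩] {Z : Ω → 𝓩}
    (hX : Measurable X) (hY : Measurable Y) (hZ : Measurable Z)
    (h : CondIndepFun (MeasurableSpace.comap X inferInstance) hX.comap_le Z Y μ) :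
    HasCondDistrib Y (fun ω ↦ (X ω, Z ω)) ((condDistrib Y X μ).prodMkRight 𝓩) μ :=
  ⟨by fun_prop, (condDistrib_ae_eq_iff_measure_eq_compProd _ hY.aemeasurable _).mp
    ((condIndepFun_iff_condDistrib_prod_ae_eq_prodMkRight hY hZ hX).mp h)⟩

lemma CondIndepFun.hasCondDistrib_prodMkLeft [StandardBorelSpace Ω] [IsFiniteMeasure μ]
    [StandardBorelSpace 𝓨] [Nonempty 𝓨] [StandardBorelSpace 𝓩] [Nonempty 𝓩] {𝓦 : Type*}
    {m𝓦 : MeasurableSpace 𝓦} {Z : Ω → 𝓩} {g : 𝓩 × 𝓧 → 𝓦} (hg : Measurable g)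
    (hX : Measurable X) (hY : Measurable Y) (hZ : Measurable Z)
    (h : CondIndepFun (MeasurableSpace.comap X inferInstance) hX.comap_le Z Y μ) :
    HasCondDistrib Y (fun ω ↦ (g (Z ω, X ω), X ω)) ((condDistrib Y X μ).prodMkLeft 𝓦) μ :=
  HasCondDistrib.comp_right (κ := (condDistrib Y X μ).prodMkLeft 𝓦)
    (f := fun q : 𝓧 × 𝓩 ↦ (g (q.2, q.1), q.1)) (hf := by fun_prop)
    (h.hasCondDistrib_prodMkRight hX hY hZ)

lemma HasCondDistrib.condDistrib_apply_ae_eq_of_preimage_eq [IsFiniteMeasure μ]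
    [StandardBorelSpace 𝓩] [Nonempty 𝓩] {Z : Ω → 𝓩} {κ : Kernel 𝓧 𝓨} [IsSFiniteKernel κ]
    (hY : HasCondDistrib Y X κ μ) (hX : Measurable X) (hZ : AEMeasurable Z μ)
    {s : Set (𝓧 × 𝓨)} {t : Set 𝓩} (hs : MeasurableSet s) (ht : MeasurableSet t)
    (hst : Z ⁻¹' t = (fun ω ↦ (X ω, Y ω)) ⁻¹' s) :
    ∀ᵐ x ∂μ.map X, condDistrib Z X μ x t = κ x (Prod.mk x ⁻¹' s) := by
  refine ae_eq_of_forall_setLIntegral_eq_of_sigmaFinite (Kernel.measurable_coe _ ht)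
    (Kernel.measurable_kernel_prodMk_left hs) fun B hB _ ↦ ?_
  have hBs : MeasurableSet (B ×ˢ univ ∩ s) := (hB.prod .univ).inter hs
  calc ∫⁻ x in B, condDistrib Z X μ x t ∂μ.map X
      = μ (X ⁻¹' B ∩ Z ⁻¹' t) := by
        rw [setLIntegral_map hB (Kernel.measurable_coe _ ht) hX,
          setLIntegral_preimage_condDistrib hX hZ ht hB]
    _ = μ.map (fun ω ↦ (X ω, Y ω)) (B ×ˢ univ ∩ s) := by
        rw [Measure.map_apply_of_aemeasurable hY.aemeasurable hBs, preimage_inter,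
          mk_preimage_prod, preimage_univ, inter_univ, hst]
    _ = ∫⁻ x in B, κ x (Prod.mk x ⁻¹' s) ∂μ.map X := by
        rw [hY.map_eq, Measure.compProd_apply hBs, ← lintegral_indicator hB]
        congr with x
        by_cases hx : x ∈ B <;> simp [hx]

lemma condDistrib_prodMk_ae_eq_compProd [IsFiniteMeasure μ] [StandardBorelSpace 𝓨]
    [Nonempty 𝓨] [StandardBorelSpace 𝓩] [Nonempty 𝓩] {Z : Ω → 𝓩} (hX : AEMeasurable X μ)
    (hY : AEMeasurable Y μ) (hZ : AEMeasurable Z μ) :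
    condDistrib (fun ω ↦ (Y ω, Z ω)) X μ
      =ᵐ[μ.map X] condDistrib Y X μ ⊗ₖ condDistrib Z (fun ω ↦ (X ω, Y ω)) μ :=
  condDistrib_ae_eq_of_measure_eq_compProd _ (hY.prodMk hZ)
    ((hasCondDistrib_condDistrib hX hY).compProd
      (hasCondDistrib_condDistrib (hX.prodMk hY) hZ)).map_eq

end ProbabilityTheory

lemma MeasureTheory.ae_map_prodMk_of_ae_map_snd {Ω α β : Type*} {mΩ : MeasurableSpace Ω}
    {mα : MeasurableSpace α} {mβ : MeasurableSpace β} {μ : Measure Ω} {X : Ω → α} {Y : Ω → β}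
    (hX : Measurable X) {q : β → Prop} (h : ∀ᵐ b ∂μ.map Y, q b) :
    ∀ᵐ p ∂μ.map (fun ω ↦ (X ω, Y ω)), q p.2 :=
  ae_of_ae_map measurable_snd.aemeasurable (by rwa [← Measure.snd_map_prodMk hX] at h)

lemma ProbabilityTheory.Kernel.compProd_apply_Iic_prod_of_apply_eq_uniform
    {α β : Type*} {mα : MeasurableSpace α} {mβ : MeasurableSpace β} {κ : Kernel α ℝ}
    {η : Kernel (α × ℝ) β} [IsSFiniteKernel κ] [IsSFiniteKernel η] {a : α}
    (ha : κ a = volume.restrict (Ioo 0 1)) {v : ℝ} (hv : v ≤ 1) {t : Set β}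
    (ht : MeasurableSet t) :
    (κ ⊗ₖ η) a (Iic v ×ˢ t) = ∫⁻ u in Ioc 0 v, η (a, u) t := by
  have hIoc : Iic v ∩ Ioc 0 1 = Ioc 0 v :=
    Set.ext fun u ↦ ⟨fun ⟨huv, hu0, _⟩ ↦ ⟨hu0, huv⟩, fun ⟨hu0, huv⟩ ↦ ⟨huv, hu0, huv.trans hv⟩⟩
  rw [Kernel.compProd_apply_prod measurableSet_Iic ht, ha,
    Measure.restrict_congr_set Ioo_ae_eq_Ioc, Measure.restrict_restrict measurableSet_Iic, hIoc]

theorem dmtr_integral_rep_treated_general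
    {Ω : Type*} [MeasurableSpace Ω] [StandardBorelSpace Ω]
    (μ : Measure Ω) [IsProbabilityMeasure μ]
    -- the random variables of the model
    (Y0 Y1 V Z C : Ω → ℝ) (P : ℝ × ℝ → ℝ)
    (hY0 : Measurable Y0) (hY1 : Measurable Y1) (hV : Measurable V)
    (hZ : Measurable Z) (hC : Measurable C) (hP : Measurable P)
    -- the treatment indicator, realized outcome, observed (censored) outcome and
    -- propensity score random variable
    (D : Ω → ℝ) (hD : D = fun ω => if V ω ≤ P (Z ω, C ω) then 1 else 0)
    (Y : Ω → ℝ) (hY : Y = fun ω => min (D ω * Y1 ω + (1 - D ω) * Y0 ω) (C ω))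
    (PS : Ω → ℝ) (hPS : PS = fun ω => P (Z ω, C ω))
    -- (A1) random assignment: conditionally on `C`, `Z ⫫ (Y*(0), Y*(1), V)`
    (hA1 : CondIndepFun (MeasurableSpace.comap C inferInstance) hC.comap_le
      Z (fun ω => (Y0 ω, Y1 ω, V ω)) μ)
    -- (A2) rank: conditionally on `C = c`, the propensity score is absolutely continuous
    -- with support the (nontrivial) interval `𝒫 = [plow, phigh] ⊆ [0,1]`, not depending on `c`
    (plow phigh : ℝ) (h𝒫sub : Set.Icc plow phigh ⊆ Set.Icc (0 : ℝ) 1)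
    -- (A3) normalization: conditionally on `C`, `V` is uniform on `(0,1)`
    (hA3 : ∀ᵐ c ∂(μ.map C),
      condDistrib V C μ c = volume.restrict (Set.Ioo (0 : ℝ) 1))
    -- the threshold `y < γ_C`
    (y : ℝ) :
    ∀ᵐ p ∂(μ.map fun ω => (PS ω, C ω)),
      p.1 ∈ Set.Icc plow phigh → y < p.2 →
      condDistrib (fun ω => (Y ω, D ω)) (fun ω => (PS ω, C ω)) μ p
          {q : ℝ × ℝ | q.1 ≤ y ∧ q.2 = 1}
        = ∫⁻ u in Set.Ioc (0 : ℝ) p.1,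
            condDistrib Y1 (fun ω => (C ω, V ω)) μ (p.2, u) (Set.Iic y) := by
  have hPS_meas : Measurable PS := hPS ▸ by fun_prop
  have hD_meas : Measurable D :=
    hD ▸ Measurable.ite (measurableSet_le hV (by fun_prop)) measurable_const measurable_const
  have hY_meas : Measurable Y := by subst hY; fun_prop
  set W : Ω → ℝ × ℝ := fun ω => (V ω, Y1 ω)
  have hW : HasCondDistrib W (fun ω => (PS ω, C ω)) ((condDistrib W C μ).prodMkLeft ℝ) μ :=
    hPS ▸ (hA1.comp measurable_id (by fun_prop : Measurable fun x : ℝ × ℝ × ℝ => (x.2.2, x.2.1))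
      ).hasCondDistrib_prodMkLeft hP hC (hV.prodMk hY1) hZ
  set T : Set (ℝ × ℝ) := {q | q.1 ≤ y ∧ q.2 = 1}
  set M : Set ((ℝ × ℝ) × ℝ × ℝ) := {x | x.2.1 ≤ x.1.1 ∧ min x.2.2 x.1.2 ≤ y}
  have hT : MeasurableSet T := by measurability
  have hM : MeasurableSet M := by measurability
  have hevent : (fun ω => (Y ω, D ω)) ⁻¹' T = (fun ω => ((PS ω, C ω), W ω)) ⁻¹' M := by
    ext ω
    subst hD hY hPS
    by_cases hVP : V ω ≤ P (Z ω, C ω) <;> simp [T, M, W, hVP]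
  have hYD := hW.condDistrib_apply_ae_eq_of_preimage_eq (hPS_meas.prodMk hC)
    (hY_meas.prodMk hD_meas).aemeasurable hM hT hevent
  have hC_ae := ae_map_prodMk_of_ae_map_snd hPS_meas
    ((condDistrib_prodMk_ae_eq_compProd hC.aemeasurable hV.aemeasurable hY1.aemeasurable).and hA3)
  filter_upwards [hYD, hC_ae] with p hp ⟨hWp, hVp⟩ hp1 hp2
  have hsec : Prod.mk p ⁻¹' M = Iic p.1 ×ˢ Iic y := by
    ext w
    simp [M, hp2.not_ge, Prod.le_def]
  rw [hp, Kernel.prodMkLeft_apply, hsec, hWp,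
    Kernel.compProd_apply_Iic_prod_of_apply_eq_uniform hVp (h𝒫sub hp1).2 measurableSet_Iic]

/-- Under Assumptions (A1)-(A4), for every `y < γ_C`, every `v` in the support interval `𝒫`
of the propensity score, and every censoring value `c = y + δ > y` in the support of `C`
(almost every conditioning value `(v, c)` w.r.t. the law of `(P(Z,C), C)`):
`ℙ[Y ≤ y, D = 1 ∣ P(Z,C) = v, C = y + δ] = ∫₀^v ℙ[Y*(1) ≤ y ∣ C = y + δ, V = u] du`. -/
theorem dmtr_integral_rep_treated
    {Ω : Type*} [MeasurableSpace Ω] [StandardBorelSpace Ω] [Nonempty Ω]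
    (μ : Measure Ω) [IsProbabilityMeasure μ]
    -- the random variables of the model
    (Y0 Y1 V Z C : Ω → ℝ) (P : ℝ × ℝ → ℝ)
    (hY0 : Measurable Y0) (hY1 : Measurable Y1) (hV : Measurable V)
    (hZ : Measurable Z) (hC : Measurable C) (hP : Measurable P)
    (hY0nn : ∀ ω, 0 ≤ Y0 ω) (hY1nn : ∀ ω, 0 ≤ Y1 ω) (hCnn : ∀ ω, 0 ≤ C ω)
    (hVrange : ∀ ω, V ω ∈ Set.Ioo (0 : ℝ) 1)
    (hPrange : ∀ p, P p ∈ Set.Icc (0 : ℝ) 1)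
    -- the treatment indicator, realized outcome, observed (censored) outcome and
    -- propensity score random variable
    (D : Ω → ℝ) (hD : D = fun ω => if V ω ≤ P (Z ω, C ω) then 1 else 0)
    (Y : Ω → ℝ) (hY : Y = fun ω => min (D ω * Y1 ω + (1 - D ω) * Y0 ω) (C ω))
    (PS : Ω → ℝ) (hPS : PS = fun ω => P (Z ω, C ω))
    -- (A1) random assignment: conditionally on `C`, `Z ⫫ (Y*(0), Y*(1), V)`
    (hA1 : CondIndepFun (MeasurableSpace.comap C inferInstance) hC.comap_le
      Z (fun ω => (Y0 ω, Y1 ω, V ω)) μ)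
    -- (A2) rank: conditionally on `C = c`, the propensity score is absolutely continuous
    -- with support the (nontrivial) interval `𝒫 = [plow, phigh] ⊆ [0,1]`, not depending on `c`
    (plow phigh : ℝ) (h𝒫sub : Set.Icc plow phigh ⊆ Set.Icc (0 : ℝ) 1) (h𝒫lt : plow < phigh)
    (hA2 : ∀ᵐ c ∂(μ.map C),
      condDistrib PS C μ c ≪ volume ∧
      condDistrib PS C μ c (Set.Icc plow phigh)ᶜ = 0 ∧
      ∀ a b : ℝ, plow ≤ a → a < b → b ≤ phigh → 0 < condDistrib PS C μ c (Set.Ioo a b))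
    -- (A3) normalization: conditionally on `C`, `V` is uniform on `(0,1)`
    (hA3 : ∀ᵐ c ∂(μ.map C),
      condDistrib V C μ c = volume.restrict (Set.Ioo (0 : ℝ) 1))
    -- (A4) overlap: `ℙ[D = d ∣ C = c] ∈ (0,1)` for `d ∈ {0,1}`
    (hA4 : ∀ᵐ c ∂(μ.map C),
      (0 < condDistrib D C μ c {(1 : ℝ)} ∧ condDistrib D C μ c {(1 : ℝ)} < 1) ∧
      (0 < condDistrib D C μ c {(0 : ℝ)} ∧ condDistrib D C μ c {(0 : ℝ)} < 1))
    -- the threshold `y < γ_C`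
    (y : ℝ) (hy : ENNReal.ofReal y < gammaSup μ C) :
    ∀ᵐ p ∂(μ.map fun ω => (PS ω, C ω)),
      p.1 ∈ Set.Icc plow phigh → y < p.2 →
      condDistrib (fun ω => (Y ω, D ω)) (fun ω => (PS ω, C ω)) μ p
          {q : ℝ × ℝ | q.1 ≤ y ∧ q.2 = 1}
        = ∫⁻ u in Set.Ioc (0 : ℝ) p.1,
            condDistrib Y1 (fun ω => (C ω, V ω)) μ (p.2, u) (Set.Iic y) :=
  dmtr_integral_rep_treated_general μ Y0 Y1 V Z C P hY0 hY1 hV hZ hC hP D hD Y hY PS hPS hA1 plow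
    phigh h𝒫sub hA3 y
end
end

section
/- Under Assumptions (A1)-(A4), for every y < γ_C, every v in the support interval 𝒫 of the propensity score, and every δ > 0 such that y+δ lies in the support of C, the conditional joint probability of the observed outcome and non-treatment satisfies ℙ[Y ≤ y, D = 0 | P(Z,C) = v, C = y+δ] = ∫_v^1 ℙ[Y*(0) ≤ y | C = y+δ, V = u] du (for almost every such conditioning value with respect to the distribution of (P(Z,C), C)). -/
/-! On the event `C > y` censoring cannot act below `y`, so `{Y ≤ y, D = 0}` is the event
`{Y*(0) ≤ y, P(Z,C) < V}`. Given `C = c`, the instrument is independent of `(V, Y*(0))` (A1) and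
`V` is uniform (A3), so the joint law of `(C, Z, V, Y*(0))` is
`law(C) ⊗ (law(Z ∣ C) × (Unif(0,1) ⊗ law(Y*(0) ∣ C, V)))`. Integrating `(V, Y*(0))` out over
`{u > P(z,c), Y*(0) ≤ y}` leaves `∫_{P(z,c)}^1 ℙ[Y*(0) ≤ y ∣ C = c, V = u] du`, a function of
`(P(Z,C), C)` alone; it is therefore the conditional probability given `(P(Z,C), C)`. -/

open MeasureTheory ProbabilityTheory Set
open scoped ENNReal

noncomputable section

lemma const_compProd_apply_Ioi_prod {α β : Type*} [MeasurableSpace α] [MeasurableSpace β]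
    (θ : Kernel (α × ℝ) β) [IsSFiniteKernel θ] (c : α) {v : ℝ} (hv : 0 ≤ v)
    {B : Set β} (hB : MeasurableSet B) :
    (Kernel.const α (volume.restrict (Ioo 0 1)) ⊗ₖ θ) c (Ioi v ×ˢ B)
      = ∫⁻ u in Ioc v 1, θ (c, u) B := by
  rw [Kernel.compProd_apply_prod measurableSet_Ioi hB, Kernel.const_apply,
    Measure.restrict_restrict measurableSet_Ioi, Ioi_inter_Ioo, max_eq_left hv]
  exact setLIntegral_congr Ioo_ae_eq_Ioc

lemma measurable_setLIntegral_Ioc {α : Type*} [MeasurableSpace α] {f : α × ℝ → ℝ≥0∞}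
    (hf : Measurable f) (b : ℝ) :
    Measurable fun p : ℝ × α ↦ ∫⁻ u in Ioc p.1 b, f (p.2, u) := by
  have hset : MeasurableSet {q : (ℝ × α) × ℝ | q.2 ∈ Ioc q.1.1 b} :=
    (measurableSet_lt (by fun_prop) measurable_snd).inter
      (measurableSet_le measurable_snd measurable_const)
  simp_rw [← lintegral_indicator measurableSet_Ioc]
  exact ((hf.comp (measurable_fst.snd.prodMk measurable_snd)).indicator hset).lintegral_prod_right'

section Disintegration

variable {Ω α β γ : Type*} {mΩ : MeasurableSpace Ω} [MeasurableSpace α] [MeasurableSpace β]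
  [MeasurableSpace γ] {μ : Measure Ω} [IsFiniteMeasure μ]

lemma condDistrib_prod_ae_eq_compProd [StandardBorelSpace β] [Nonempty β]
    [StandardBorelSpace γ] [Nonempty γ] {X : Ω → α} {U : Ω → β} {W : Ω → γ}
    (hX : Measurable X) (hU : Measurable U) (hW : Measurable W) :
    condDistrib (fun ω ↦ (U ω, W ω)) X μ
      =ᵐ[μ.map X] condDistrib U X μ ⊗ₖ condDistrib W (fun ω ↦ (X ω, U ω)) μ := by
  refine condDistrib_ae_eq_of_measure_eq_compProd X (hU.prodMk hW).aemeasurable ?_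
  rw [← Measure.compProd_assoc', compProd_map_condDistrib hU.aemeasurable,
    compProd_map_condDistrib hW.aemeasurable, Measure.map_map (by fun_prop) (by fun_prop)]
  rfl

lemma map_prod_eq_compProd_prod_of_condIndepFun [StandardBorelSpace Ω]
    [StandardBorelSpace β] [Nonempty β] [StandardBorelSpace γ] [Nonempty γ]
    {X : Ω → α} {Z : Ω → β} {W : Ω → γ} (hX : Measurable X) (hZ : Measurable Z)
    (hW : Measurable W) (h : Z ⟂ᵢ[X, hX; μ] W) :
    μ.map (fun ω ↦ (X ω, Z ω, W ω)) = μ.map X ⊗ₘ (condDistrib Z X μ ×ₖ condDistrib W X μ) := by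
  rw [Measure.compProd_eq_comp_prod]
  exact (condIndepFun_iff_map_prod_eq_prod_condDistrib_prod_condDistrib hZ hW hX).mp h

lemma condDistrib_apply_ae_eq_of_forall_measure_inter [StandardBorelSpace β] [Nonempty β]
    {X : Ω → α} {W : Ω → β} (hX : Measurable X) (hW : Measurable W)
    {S : Set β} (hS : MeasurableSet S) {R : Set α} (hR : MeasurableSet R)
    {g : α → ℝ≥0∞} (hg : Measurable g)
    (h : ∀ A, MeasurableSet A → A ⊆ R →
      μ (X ⁻¹' A ∩ W ⁻¹' S) = ∫⁻ x in A, g x ∂(μ.map X)) :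
    ∀ᵐ x ∂(μ.map X), x ∈ R → condDistrib W X μ x S = g x := by
  rw [← ae_restrict_iff' hR]
  refine ae_eq_of_forall_setLIntegral_eq_of_sigmaFinite (Kernel.measurable_coe _ hS) hg
    fun A hA _ ↦ ?_
  rw [Measure.restrict_restrict hA, ← h _ (hA.inter hR) inter_subset_right,
    setLIntegral_map (hA.inter hR) (Kernel.measurable_coe _ hS) hX,
    setLIntegral_preimage_condDistrib hX hW.aemeasurable hS (hA.inter hR)]

end Disintegration

section Model

variable {Ω α β δ : Type*} {mΩ : MeasurableSpace Ω} [StandardBorelSpace Ω]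
  [MeasurableSpace α] [MeasurableSpace β] [StandardBorelSpace β] [Nonempty β]
  [MeasurableSpace δ] [StandardBorelSpace δ] [Nonempty δ]
  {μ : Measure Ω} [IsFiniteMeasure μ]

lemma map_eq_compProd_prod_const_compProd {C : Ω → α} {Z : Ω → β} {V : Ω → ℝ} {Y0 : Ω → δ}
    (hC : Measurable C) (hZ : Measurable Z) (hV : Measurable V) (hY0 : Measurable Y0)
    (hCI : Z ⟂ᵢ[C, hC; μ] (fun ω ↦ (V ω, Y0 ω))) {ν : Measure ℝ} [SFinite ν]
    (hVC : ∀ᵐ c ∂(μ.map C), condDistrib V C μ c = ν) :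
    μ.map (fun ω ↦ (C ω, Z ω, (V ω, Y0 ω))) = μ.map C ⊗ₘ
      (condDistrib Z C μ ×ₖ (Kernel.const α ν ⊗ₖ condDistrib Y0 (fun ω ↦ (C ω, V ω)) μ)) := by
  rw [map_prod_eq_compProd_prod_of_condIndepFun hC hZ (hV.prodMk hY0) hCI]
  refine Measure.compProd_congr ?_
  filter_upwards [condDistrib_prod_ae_eq_compProd (μ := μ) hC hV hY0, hVC] with c hc hνc
  rw [Kernel.prod_apply, Kernel.prod_apply, hc]
  congr 1
  ext s hs
  rw [Kernel.compProd_apply hs, Kernel.compProd_apply hs, hνc, Kernel.const_apply]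

lemma measure_preimage_inter_lt_eq_setLIntegral {C : Ω → α} {Z : Ω → β} {V : Ω → ℝ}
    {Y0 : Ω → δ} {P : β × α → ℝ} (hC : Measurable C) (hZ : Measurable Z) (hV : Measurable V)
    (hY0 : Measurable Y0) (hP : Measurable P) (hCI : Z ⟂ᵢ[C, hC; μ] (fun ω ↦ (V ω, Y0 ω)))
    (hVC : ∀ᵐ c ∂(μ.map C), condDistrib V C μ c = volume.restrict (Ioo 0 1))
    {B : Set δ} (hB : MeasurableSet B) {A : Set (ℝ × α)} (hA : MeasurableSet A)
    (hA0 : ∀ p ∈ A, 0 ≤ p.1) :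
    μ ((fun ω ↦ (P (Z ω, C ω), C ω)) ⁻¹' A ∩ {ω | Y0 ω ∈ B ∧ P (Z ω, C ω) < V ω})
      = ∫⁻ p in A, (∫⁻ u in Ioc p.1 1, condDistrib Y0 (fun ω ↦ (C ω, V ω)) μ (p.2, u) B)
          ∂(μ.map fun ω ↦ (P (Z ω, C ω), C ω)) := by
  set θ := condDistrib Y0 (fun ω ↦ (C ω, V ω)) μ
  set g : ℝ × α → ℝ≥0∞ := fun p ↦ ∫⁻ u in Ioc p.1 1, θ (p.2, u) B
  have hg : Measurable g := measurable_setLIntegral_Ioc (Kernel.measurable_coe θ hB) 1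
  have hPS : Measurable fun q : α × β ↦ (P (q.2, q.1), q.1) := by fun_prop
  set T : Set (α × β × ℝ × δ) :=
    {q | (P (q.2.1, q.1), q.1) ∈ A ∧ q.2.2.2 ∈ B ∧ P (q.2.1, q.1) < q.2.2.1}
  have hT : MeasurableSet T :=
    (hPS.comp (measurable_fst.prodMk measurable_snd.fst) hA).inter
      ((measurable_snd.snd.snd hB).inter (measurableSet_lt
        (hP.comp (measurable_snd.fst.prodMk measurable_fst)) measurable_snd.snd.fst))
  have hslice : ∀ c z, (Kernel.const α (volume.restrict (Ioo 0 1)) ⊗ₖ θ) c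
      (Prod.mk z ⁻¹' (Prod.mk c ⁻¹' T)) = A.indicator g (P (z, c), c) := by
    intro c z
    by_cases hzc : (P (z, c), c) ∈ A
    · have : Prod.mk z ⁻¹' (Prod.mk c ⁻¹' T) = Ioi (P (z, c)) ×ˢ B := by
        ext; simp [T, hzc, and_comm]
      rw [this, indicator_of_mem hzc, const_compProd_apply_Ioi_prod θ c (hA0 _ hzc) hB]
    · have : Prod.mk z ⁻¹' (Prod.mk c ⁻¹' T) = ∅ := by
        ext; simp [T, hzc]
      rw [this, indicator_of_notMem hzc, measure_empty]
  calc μ ((fun ω ↦ (P (Z ω, C ω), C ω)) ⁻¹' A ∩ {ω | Y0 ω ∈ B ∧ P (Z ω, C ω) < V ω})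
      = μ.map (fun ω ↦ (C ω, Z ω, (V ω, Y0 ω))) T := by
        rw [Measure.map_apply (by fun_prop) hT]; rfl
    _ = ∫⁻ c, ∫⁻ z, A.indicator g (P (z, c), c) ∂(condDistrib Z C μ c) ∂(μ.map C) := by
        rw [map_eq_compProd_prod_const_compProd hC hZ hV hY0 hCI hVC, Measure.compProd_apply hT]
        refine lintegral_congr fun c ↦ ?_
        rw [Kernel.prod_apply, Measure.prod_apply (measurable_prodMk_left hT)]
        exact lintegral_congr fun z ↦ hslice c z
    _ = ∫⁻ q, A.indicator g (P (q.2, q.1), q.1) ∂(μ.map fun ω ↦ (C ω, Z ω)) := by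
        rw [← compProd_map_condDistrib hZ.aemeasurable,
          Measure.lintegral_compProd (f := fun q ↦ A.indicator g (P (q.2, q.1), q.1))
            ((hg.indicator hA).comp hPS)]
    _ = ∫⁻ p in A, g p ∂(μ.map fun ω ↦ (P (Z ω, C ω), C ω)) := by
        rw [← lintegral_indicator hA,
          lintegral_map (f := fun q ↦ A.indicator g (P (q.2, q.1), q.1))
            ((hg.indicator hA).comp hPS) (hC.prodMk hZ)]
        exact (lintegral_map (hg.indicator hA) ((hP.comp (hZ.prodMk hC)).prodMk hC)).symm

end Model

lemma untreated_censored_le_iff {v p y0 y1 c y : ℝ} (hyc : y < c) :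
    (min ((if v ≤ p then 1 else 0) * y1 + (1 - if v ≤ p then 1 else 0) * y0) c ≤ y ∧
      (if v ≤ p then (1 : ℝ) else 0) = 0) ↔ y0 ≤ y ∧ p < v := by
  by_cases hvp : v ≤ p
  · simp [hvp]
  · simp [hvp, not_le.mp hvp, not_le.mpr hyc]

theorem dmtr_integral_rep_untreated_general
    {Ω : Type*} [MeasurableSpace Ω] [StandardBorelSpace Ω]
    (μ : Measure Ω) [IsProbabilityMeasure μ]
    -- the random variables of the model
    (Y0 Y1 V Z C : Ω → ℝ) (P : ℝ × ℝ → ℝ)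
    (hY0 : Measurable Y0) (hY1 : Measurable Y1) (hV : Measurable V)
    (hZ : Measurable Z) (hC : Measurable C) (hP : Measurable P)
    -- the treatment indicator, realized outcome, observed (censored) outcome and
    -- propensity score random variable
    (D : Ω → ℝ) (hD : D = fun ω => if V ω ≤ P (Z ω, C ω) then 1 else 0)
    (Y : Ω → ℝ) (hY : Y = fun ω => min (D ω * Y1 ω + (1 - D ω) * Y0 ω) (C ω))
    (PS : Ω → ℝ) (hPS : PS = fun ω => P (Z ω, C ω))
    -- (A1) random assignment: conditionally on `C`, `Z ⫫ (Y*(0), Y*(1), V)`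
    (hA1 : CondIndepFun (MeasurableSpace.comap C inferInstance) hC.comap_le
      Z (fun ω => (Y0 ω, Y1 ω, V ω)) μ)
    -- (A2) rank: conditionally on `C = c`, the propensity score is absolutely continuous
    -- with support the (nontrivial) interval `𝒫 = [plow, phigh] ⊆ [0,1]`, not depending on `c`
    (plow phigh : ℝ) (h𝒫sub : Set.Icc plow phigh ⊆ Set.Icc (0 : ℝ) 1)
    -- (A3) normalization: conditionally on `C`, `V` is uniform on `(0,1)`
    (hA3 : ∀ᵐ c ∂(μ.map C),
      condDistrib V C μ c = volume.restrict (Set.Ioo (0 : ℝ) 1))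
    -- the threshold `y < γ_C`
    (y : ℝ) :
    ∀ᵐ p ∂(μ.map fun ω => (PS ω, C ω)),
      p.1 ∈ Set.Icc plow phigh → y < p.2 →
      condDistrib (fun ω => (Y ω, D ω)) (fun ω => (PS ω, C ω)) μ p
          {q : ℝ × ℝ | q.1 ≤ y ∧ q.2 = 0}
        = ∫⁻ u in Set.Ioc p.1 (1 : ℝ),
            condDistrib Y0 (fun ω => (C ω, V ω)) μ (p.2, u) (Set.Iic y) := by
  have hDm : Measurable D := hD ▸
    Measurable.ite (measurableSet_le hV (hP.comp (hZ.prodMk hC))) measurable_const measurable_const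
  have hYm : Measurable Y := hY ▸ ((hDm.mul hY1).add ((measurable_const.sub hDm).mul hY0)).min hC
  subst hPS hY hD
  have hCI : Z ⟂ᵢ[C, hC; μ] (fun ω ↦ (V ω, Y0 ω)) :=
    hA1.comp measurable_id (measurable_snd.snd.prodMk measurable_fst)
  have hR : MeasurableSet (Icc plow phigh ×ˢ Ioi y) := measurableSet_Icc.prod measurableSet_Ioi
  have hS : MeasurableSet {q : ℝ × ℝ | q.1 ≤ y ∧ q.2 = 0} :=
    (measurableSet_le measurable_fst measurable_const).inter
      (measurable_snd (measurableSet_singleton 0))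
  have hg : Measurable fun p : ℝ × ℝ ↦
      ∫⁻ u in Ioc p.1 1, condDistrib Y0 (fun ω ↦ (C ω, V ω)) μ (p.2, u) (Iic y) :=
    measurable_setLIntegral_Ioc (Kernel.measurable_coe _ measurableSet_Iic) 1
  have hX : Measurable fun ω ↦ (P (Z ω, C ω), C ω) := (hP.comp (hZ.prodMk hC)).prodMk hC
  refine (condDistrib_apply_ae_eq_of_forall_measure_inter hX (hYm.prodMk hDm) hS hR hg
    fun A hA hAR ↦ ?_).mono fun p hp h1 h2 ↦ hp ⟨h1, h2⟩
  rw [← measure_preimage_inter_lt_eq_setLIntegral hC hZ hV hY0 hP hCI hA3 measurableSet_Iic hA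
    fun p hp ↦ (h𝒫sub (hAR hp).1).1]
  congr 1
  ext ω
  simp only [mem_inter_iff, mem_preimage, mem_ofPred_eq, mem_Iic]
  exact and_congr_right fun hω ↦ untreated_censored_le_iff (hAR hω).2

/-- Under Assumptions (A1)-(A4), for every `y < γ_C`, every `v` in the support interval `𝒫`
of the propensity score, and every censoring value `c = y + δ > y` in the support of `C`
(almost every conditioning value `(v, c)` w.r.t. the law of `(P(Z,C), C)`):
`ℙ[Y ≤ y, D = 0 ∣ P(Z,C) = v, C = y + δ] = ∫_v^1 ℙ[Y*(0) ≤ y ∣ C = y + δ, V = u] du`. -/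
theorem dmtr_integral_rep_untreated
    {Ω : Type*} [MeasurableSpace Ω] [StandardBorelSpace Ω] [Nonempty Ω]
    (μ : Measure Ω) [IsProbabilityMeasure μ]
    -- the random variables of the model
    (Y0 Y1 V Z C : Ω → ℝ) (P : ℝ × ℝ → ℝ)
    (hY0 : Measurable Y0) (hY1 : Measurable Y1) (hV : Measurable V)
    (hZ : Measurable Z) (hC : Measurable C) (hP : Measurable P)
    (hY0nn : ∀ ω, 0 ≤ Y0 ω) (hY1nn : ∀ ω, 0 ≤ Y1 ω) (hCnn : ∀ ω, 0 ≤ C ω)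
    (hVrange : ∀ ω, V ω ∈ Set.Ioo (0 : ℝ) 1)
    (hPrange : ∀ p, P p ∈ Set.Icc (0 : ℝ) 1)
    -- the treatment indicator, realized outcome, observed (censored) outcome and
    -- propensity score random variable
    (D : Ω → ℝ) (hD : D = fun ω => if V ω ≤ P (Z ω, C ω) then 1 else 0)
    (Y : Ω → ℝ) (hY : Y = fun ω => min (D ω * Y1 ω + (1 - D ω) * Y0 ω) (C ω))
    (PS : Ω → ℝ) (hPS : PS = fun ω => P (Z ω, C ω))
    -- (A1) random assignment: conditionally on `C`, `Z ⫫ (Y*(0), Y*(1), V)`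
    (hA1 : CondIndepFun (MeasurableSpace.comap C inferInstance) hC.comap_le
      Z (fun ω => (Y0 ω, Y1 ω, V ω)) μ)
    -- (A2) rank: conditionally on `C = c`, the propensity score is absolutely continuous
    -- with support the (nontrivial) interval `𝒫 = [plow, phigh] ⊆ [0,1]`, not depending on `c`
    (plow phigh : ℝ) (h𝒫sub : Set.Icc plow phigh ⊆ Set.Icc (0 : ℝ) 1) (h𝒫lt : plow < phigh)
    (hA2 : ∀ᵐ c ∂(μ.map C),
      condDistrib PS C μ c ≪ volume ∧
      condDistrib PS C μ c (Set.Icc plow phigh)ᶜ = 0 ∧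
      ∀ a b : ℝ, plow ≤ a → a < b → b ≤ phigh → 0 < condDistrib PS C μ c (Set.Ioo a b))
    -- (A3) normalization: conditionally on `C`, `V` is uniform on `(0,1)`
    (hA3 : ∀ᵐ c ∂(μ.map C),
      condDistrib V C μ c = volume.restrict (Set.Ioo (0 : ℝ) 1))
    -- (A4) overlap: `ℙ[D = d ∣ C = c] ∈ (0,1)` for `d ∈ {0,1}`
    (hA4 : ∀ᵐ c ∂(μ.map C),
      (0 < condDistrib D C μ c {(1 : ℝ)} ∧ condDistrib D C μ c {(1 : ℝ)} < 1) ∧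
      (0 < condDistrib D C μ c {(0 : ℝ)} ∧ condDistrib D C μ c {(0 : ℝ)} < 1))
    -- the threshold `y < γ_C`
    (y : ℝ) (hy : ENNReal.ofReal y < gammaSup μ C) :
    ∀ᵐ p ∂(μ.map fun ω => (PS ω, C ω)),
      p.1 ∈ Set.Icc plow phigh → y < p.2 →
      condDistrib (fun ω => (Y ω, D ω)) (fun ω => (PS ω, C ω)) μ p
          {q : ℝ × ℝ | q.1 ≤ y ∧ q.2 = 0}
        = ∫⁻ u in Set.Ioc p.1 (1 : ℝ),
            condDistrib Y0 (fun ω => (C ω, V ω)) μ (p.2, u) (Set.Iic y) :=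
  dmtr_integral_rep_untreated_general μ Y0 Y1 V Z C P hY0 hY1 hV hZ hC hP D hD Y hY PS hPS hA1 plow
    phigh h𝒫sub hA3 y
end
end

section
/- Suppose V is independent of C (with V uniform on (0,1)) and the potential outcome Y*(d) is negatively regression dependent on C given V, i.e. for all y, almost every v, and all c ≤ c̃ in the support of C: ℙ[Y*(d) ≤ y | C = c̃, V = v] ≥ ℙ[Y*(d) ≤ y | C = c, V = v]. Then for every y, almost every v, and every δ > 0 with y+δ in the support of C, the following two-sided bound holds: ℙ(C ≥ y+δ) · ℙ[Y*(d) ≤ y | C = y+δ, V = v] ≤ ℙ[Y*(d) ≤ y | V = v] ≤ ℙ(C ≤ y) + ℙ(C ≥ y+δ) + ℙ(y ≤ C ≤ y+δ) · ℙ[Y*(d) ≤ y | C = y+δ, V = v]. -/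
/-!
Since `V` has the same conditional law given every value of `C`, the law of `(C, V)` is a
product, so the conditional law of `Y*(d)` given `V = v` is the average, over the law of `C`,
of the conditional laws given `(C, V) = (c, v)`. The integrand
`c ↦ ℙ[Y*(d) ≤ y ∣ C = c, V = v]` is nondecreasing on the support of `C`, which carries the law
of `C`: comparing it with its value at `y + δ` on `{C ≥ y + δ}` and on `(y, y + δ)`, and with `1`
elsewhere, gives the two bounds.
-/

open MeasureTheory ProbabilityTheory Set
open scoped ENNReal

noncomputable section

/-- The support of the distribution of a real random variable `C`: the set of points all of
whose neighborhoods have positive probability. -/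
def distSupport {Ω : Type*} [MeasurableSpace Ω] (μ : Measure Ω) (C : Ω → ℝ) : Set ℝ :=
  {c : ℝ | ∀ ε > 0, 0 < μ {ω | |C ω - c| < ε}}

lemma distSupport_eq_support {Ω : Type*} [MeasurableSpace Ω] {μ : Measure Ω} {C : Ω → ℝ}
    (hC : Measurable C) : distSupport μ C = (μ.map C).support := by
  ext c
  rw [Metric.nhds_basis_ball.mem_measureSupport]
  refine forall₂_congr fun ε _ => ?_
  rw [Measure.map_apply hC measurableSet_ball]
  simp only [preimage, Metric.mem_ball, Real.dist_eq]

lemma ae_mem_distSupport {Ω : Type*} [MeasurableSpace Ω] {μ : Measure Ω} {C : Ω → ℝ}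
    (hC : Measurable C) : ∀ᵐ c ∂μ.map C, c ∈ distSupport μ C := by
  rw [distSupport_eq_support hC]
  exact Measure.support_mem_ae

namespace ProbabilityTheory.Kernel

variable {α β γ : Type*} [MeasurableSpace α] [MeasurableSpace β] [MeasurableSpace γ]

def averageFst (ν : Measure α) (κ : Kernel (α × β) γ) : Kernel β γ :=
  snd (const β ν ⊗ₖ κ.comap Prod.swap measurable_swap)

instance (ν : Measure α) [SFinite ν] (κ : Kernel (α × β) γ) [IsSFiniteKernel κ] :
    IsSFiniteKernel (averageFst ν κ) := by
  unfold averageFst; infer_instance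

instance (ν : Measure α) [IsProbabilityMeasure ν] (κ : Kernel (α × β) γ) [IsMarkovKernel κ] :
    IsMarkovKernel (averageFst ν κ) := by
  unfold averageFst; infer_instance

lemma averageFst_apply (ν : Measure α) [SFinite ν] (κ : Kernel (α × β) γ) [IsSFiniteKernel κ]
    (b : β) {A : Set γ} (hA : MeasurableSet A) :
    averageFst ν κ b A = ∫⁻ a, κ (a, b) A ∂ν := by
  rw [averageFst, snd_apply' _ _ hA, compProd_apply (measurable_snd hA)]
  rfl

end ProbabilityTheory.Kernel

lemma map_compProd_prod_eq_compProd_averageFst {α β γ : Type*} [MeasurableSpace α]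
    [MeasurableSpace β] [MeasurableSpace γ] (ν : Measure α) [SFinite ν] (ρ : Measure β) [SFinite ρ]
    (κ : Kernel (α × β) γ) [IsSFiniteKernel κ] :
    ((ν.prod ρ) ⊗ₘ κ).map (fun p => (p.1.2, p.2)) = ρ ⊗ₘ Kernel.averageFst ν κ := by
  have hf : Measurable fun p : (α × β) × γ => (p.1.2, p.2) := by fun_prop
  ext s hs
  have hslice : Measurable fun ab : α × β => κ ab (Prod.mk ab.2 ⁻¹' s) :=
    κ.measurable_kernel_prodMk_left (hf hs)
  calc ((ν.prod ρ) ⊗ₘ κ).map (fun p => (p.1.2, p.2)) s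
      = ∫⁻ ab, κ ab (Prod.mk ab.2 ⁻¹' s) ∂(ν.prod ρ) := by
        rw [Measure.map_apply hf hs, Measure.compProd_apply (hf hs)]
        rfl
    _ = ∫⁻ b, ∫⁻ a, κ (a, b) (Prod.mk b ⁻¹' s) ∂ν ∂ρ := by
        rw [lintegral_prod _ hslice.aemeasurable, lintegral_lintegral_swap hslice.aemeasurable]
    _ = (ρ ⊗ₘ Kernel.averageFst ν κ) s := by
        rw [Measure.compProd_apply hs]
        exact lintegral_congr fun b =>
          (Kernel.averageFst_apply ν κ b (measurable_prodMk_left hs)).symm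

lemma map_prodMk_eq_prod_of_condDistrib_ae_eq {Ω α β : Type*} [MeasurableSpace Ω]
    [MeasurableSpace α] [MeasurableSpace β] [StandardBorelSpace β] [Nonempty β]
    {μ : Measure Ω} [IsFiniteMeasure μ] {X : Ω → α} {Y : Ω → β} (hY : Measurable Y)
    {ρ : Measure β} [SFinite ρ] (h : ∀ᵐ a ∂μ.map X, condDistrib Y X μ a = ρ) :
    μ.map (fun ω => (X ω, Y ω)) = (μ.map X).prod ρ := by
  rw [← compProd_map_condDistrib hY.aemeasurable, ← Measure.compProd_const]
  exact Measure.compProd_congr h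

lemma condDistrib_ae_eq_averageFst {Ω α β γ : Type*} [MeasurableSpace Ω]
    [MeasurableSpace α] [MeasurableSpace β] [MeasurableSpace γ] [StandardBorelSpace γ] [Nonempty γ]
    {μ : Measure Ω} [IsProbabilityMeasure μ] {X : Ω → α} {Y : Ω → β} {Z : Ω → γ}
    (hX : Measurable X) (hY : Measurable Y) (hZ : Measurable Z)
    {ρ : Measure β} [SFinite ρ] (h : μ.map (fun ω => (X ω, Y ω)) = (μ.map X).prod ρ) :
    ∀ᵐ b ∂ρ, condDistrib Z Y μ b
      = Kernel.averageFst (μ.map X) (condDistrib Z (fun ω => (X ω, Y ω)) μ) b := by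
  have : IsProbabilityMeasure (μ.map X) := Measure.isProbabilityMeasure_map hX.aemeasurable
  have hmapY : μ.map Y = ρ := by
    rw [← Measure.snd_map_prodMk hX, h, Measure.snd_prod]
  have hXY : Measurable fun ω => (X ω, Y ω) := hX.prodMk hY
  rw [← hmapY]
  refine condDistrib_ae_eq_of_measure_eq_compProd Y hZ.aemeasurable ?_
  rw [hmapY, ← map_compProd_prod_eq_compProd_averageFst, ← h,
    compProd_map_condDistrib hZ.aemeasurable, Measure.map_map (by fun_prop) (hXY.prodMk hZ)]
  rfl

section MonotoneBounds

variable {α : Type*} [LinearOrder α] [TopologicalSpace α] [OrderClosedTopology α]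
  [MeasurableSpace α] [OpensMeasurableSpace α] {ν : Measure α} {f : α → ℝ≥0∞} {S : Set α}

lemma measure_Ici_mul_le_lintegral_of_monotoneOn (hf : MonotoneOn f S) (hS : ∀ᵐ x ∂ν, x ∈ S)
    {b : α} (hb : b ∈ S) : ν (Ici b) * f b ≤ ∫⁻ x, f x ∂ν :=
  calc ν (Ici b) * f b = ∫⁻ _ in Ici b, f b ∂ν := by rw [setLIntegral_const, mul_comm]
    _ ≤ ∫⁻ x in Ici b, f x ∂ν := by
        refine lintegral_mono_ae ?_
        filter_upwards [ae_restrict_mem measurableSet_Ici, ae_restrict_of_ae hS] with x hbx hx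
        exact hf hb hx hbx
    _ ≤ ∫⁻ x, f x ∂ν := setLIntegral_le_lintegral _ _

lemma lintegral_le_of_monotoneOn (hf : MonotoneOn f S) (hf_le_one : ∀ x, f x ≤ 1)
    (hS : ∀ᵐ x ∂ν, x ∈ S) (a : α) {b : α} (hb : b ∈ S) :
    ∫⁻ x, f x ∂ν ≤ ν (Iic a) + ν (Ici b) + ν (Icc a b) * f b := by
  have hcover : Iic a ∪ (Ioo a b ∪ Ici b) = univ := by
    refine eq_univ_of_forall fun x => ?_
    simp only [mem_union, mem_Iic, mem_Ioo, mem_Ici]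
    grind
  have hlow : ∫⁻ x in Iic a, f x ∂ν ≤ ν (Iic a) :=
    (lintegral_mono hf_le_one).trans_eq (setLIntegral_one _)
  have hhigh : ∫⁻ x in Ici b, f x ∂ν ≤ ν (Ici b) :=
    (lintegral_mono hf_le_one).trans_eq (setLIntegral_one _)
  have hmid : ∫⁻ x in Ioo a b, f x ∂ν ≤ ν (Icc a b) * f b :=
    calc ∫⁻ x in Ioo a b, f x ∂ν ≤ ∫⁻ _ in Ioo a b, f b ∂ν := by
          refine lintegral_mono_ae ?_
          filter_upwards [ae_restrict_mem measurableSet_Ioo, ae_restrict_of_ae hS] with x hxab hx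
          exact hf hx hb hxab.2.le
      _ ≤ ν (Icc a b) * f b := by
          rw [setLIntegral_const, mul_comm]
          gcongr
          exact Ioo_subset_Icc_self
  calc ∫⁻ x, f x ∂ν = ∫⁻ x in Iic a ∪ (Ioo a b ∪ Ici b), f x ∂ν := by
        rw [hcover, Measure.restrict_univ]
    _ ≤ ∫⁻ x in Iic a, f x ∂ν + (∫⁻ x in Ioo a b, f x ∂ν + ∫⁻ x in Ici b, f x ∂ν) :=
        (lintegral_union_le _ _ _).trans (add_le_add_right (lintegral_union_le _ _ _) _)
    _ ≤ ν (Iic a) + (ν (Icc a b) * f b + ν (Ici b)) := add_le_add hlow (add_le_add hmid hhigh)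
    _ = ν (Iic a) + ν (Ici b) + ν (Icc a b) * f b := by ring

end MonotoneBounds

theorem dmtr_bounds_of_negative_regression_dependence_general
    {Ω : Type*} [MeasurableSpace Ω]
    (μ : Measure Ω) [IsProbabilityMeasure μ]
    -- the potential outcome `Y*(d)`, the latent heterogeneity `V`, the censoring variable `C`
    (Yd V C : Ω → ℝ)
    (hYd : Measurable Yd) (hV : Measurable V) (hC : Measurable C)
    -- `V` is independent of `C`, with conditional distribution Uniform(0,1)
    (hVunif : ∀ᵐ c ∂(μ.map C),
      condDistrib V C μ c = volume.restrict (Set.Ioo (0 : ℝ) 1))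
    -- negative regression dependence of `Y*(d)` on `C` given `V`:
    -- `c ↦ ℙ[Y*(d) ≤ y ∣ C = c, V = v]` is nondecreasing on the support of `C`
    (hNRD : ∀ y : ℝ, ∀ᵐ v ∂(volume.restrict (Set.Ioo (0 : ℝ) 1)),
      ∀ c ∈ distSupport μ C, ∀ c' ∈ distSupport μ C, c ≤ c' →
        condDistrib Yd (fun ω => (C ω, V ω)) μ (c, v) (Set.Iic y)
          ≤ condDistrib Yd (fun ω => (C ω, V ω)) μ (c', v) (Set.Iic y)) :
    ∀ y : ℝ, ∀ᵐ v ∂(volume.restrict (Set.Ioo (0 : ℝ) 1)),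
      ∀ δ : ℝ, 0 < δ → y + δ ∈ distSupport μ C →
        (μ {ω | y + δ ≤ C ω}).toReal *
            (condDistrib Yd (fun ω => (C ω, V ω)) μ (y + δ, v) (Set.Iic y)).toReal
          ≤ (condDistrib Yd V μ v (Set.Iic y)).toReal ∧
        (condDistrib Yd V μ v (Set.Iic y)).toReal
          ≤ (μ {ω | C ω ≤ y}).toReal + (μ {ω | y + δ ≤ C ω}).toReal +
              (μ {ω | y ≤ C ω ∧ C ω ≤ y + δ}).toReal *
                (condDistrib Yd (fun ω => (C ω, V ω)) μ (y + δ, v) (Set.Iic y)).toReal := by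
  have hlaw := map_prodMk_eq_prod_of_condDistrib_ae_eq hV hVunif
  intro y
  filter_upwards [condDistrib_ae_eq_averageFst hC hV hYd hlaw, hNRD y] with v hv hmono
  intro δ _ hyδ
  have htotal : condDistrib Yd V μ v (Iic y)
      = ∫⁻ c, condDistrib Yd (fun ω => (C ω, V ω)) μ (c, v) (Iic y) ∂μ.map C := by
    rw [hv, Kernel.averageFst_apply _ _ _ measurableSet_Iic]
  have hle : μ {ω | C ω ≤ y} = μ.map C (Iic y) := (Measure.map_apply hC measurableSet_Iic).symm
  have hge : μ {ω | y + δ ≤ C ω} = μ.map C (Ici (y + δ)) :=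
    (Measure.map_apply hC measurableSet_Ici).symm
  have hbetween : μ {ω | y ≤ C ω ∧ C ω ≤ y + δ} = μ.map C (Icc y (y + δ)) :=
    (Measure.map_apply hC measurableSet_Icc).symm
  rw [hle, hge, hbetween, ← ENNReal.toReal_mul, ← ENNReal.toReal_mul,
    ← ENNReal.toReal_add (by finiteness) (by finiteness),
    ← ENNReal.toReal_add (by finiteness) (by finiteness)]
  refine ⟨ENNReal.toReal_mono (by finiteness) ?_, ENNReal.toReal_mono (by finiteness) ?_⟩ <;>
    rw [htotal]
  · exact measure_Ici_mul_le_lintegral_of_monotoneOn hmono (ae_mem_distSupport hC) hyδ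
  · exact lintegral_le_of_monotoneOn hmono (fun _ => prob_le_one) (ae_mem_distSupport hC) y hyδ

/-- If `V` is independent of `C` (with `V` uniform on `(0,1)` given `C`) and the potential
outcome `Y*(d)` is negatively regression dependent on `C` given `V`, then for every `y`,
almost every `v`, and every `δ > 0` with `y + δ` in the support of `C`:
`ℙ(C ≥ y+δ) · ℙ[Y*(d) ≤ y ∣ C = y+δ, V = v] ≤ ℙ[Y*(d) ≤ y ∣ V = v]` and
`ℙ[Y*(d) ≤ y ∣ V = v]
  ≤ ℙ(C ≤ y) + ℙ(C ≥ y+δ) + ℙ(y ≤ C ≤ y+δ) · ℙ[Y*(d) ≤ y ∣ C = y+δ, V = v]`. -/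
theorem dmtr_bounds_of_negative_regression_dependence
    {Ω : Type*} [MeasurableSpace Ω] [StandardBorelSpace Ω] [Nonempty Ω]
    (μ : Measure Ω) [IsProbabilityMeasure μ]
    -- the potential outcome `Y*(d)`, the latent heterogeneity `V`, the censoring variable `C`
    (Yd V C : Ω → ℝ)
    (hYd : Measurable Yd) (hV : Measurable V) (hC : Measurable C)
    (hYdnn : ∀ ω, 0 ≤ Yd ω) (hCnn : ∀ ω, 0 ≤ C ω)
    (hVrange : ∀ ω, V ω ∈ Set.Ioo (0 : ℝ) 1)
    -- `V` is independent of `C`, with conditional distribution Uniform(0,1)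
    (hVC : IndepFun V C μ)
    (hVunif : ∀ᵐ c ∂(μ.map C),
      condDistrib V C μ c = volume.restrict (Set.Ioo (0 : ℝ) 1))
    -- negative regression dependence of `Y*(d)` on `C` given `V`:
    -- `c ↦ ℙ[Y*(d) ≤ y ∣ C = c, V = v]` is nondecreasing on the support of `C`
    (hNRD : ∀ y : ℝ, ∀ᵐ v ∂(volume.restrict (Set.Ioo (0 : ℝ) 1)),
      ∀ c ∈ distSupport μ C, ∀ c' ∈ distSupport μ C, c ≤ c' →
        condDistrib Yd (fun ω => (C ω, V ω)) μ (c, v) (Set.Iic y)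
          ≤ condDistrib Yd (fun ω => (C ω, V ω)) μ (c', v) (Set.Iic y)) :
    ∀ y : ℝ, ∀ᵐ v ∂(volume.restrict (Set.Ioo (0 : ℝ) 1)),
      ∀ δ : ℝ, 0 < δ → y + δ ∈ distSupport μ C →
        (μ {ω | y + δ ≤ C ω}).toReal *
            (condDistrib Yd (fun ω => (C ω, V ω)) μ (y + δ, v) (Set.Iic y)).toReal
          ≤ (condDistrib Yd V μ v (Set.Iic y)).toReal ∧
        (condDistrib Yd V μ v (Set.Iic y)).toReal
          ≤ (μ {ω | C ω ≤ y}).toReal + (μ {ω | y + δ ≤ C ω}).toReal +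
              (μ {ω | y ≤ C ω ∧ C ω ≤ y + δ}).toReal *
                (condDistrib Yd (fun ω => (C ω, V ω)) μ (y + δ, v) (Set.Iic y)).toReal :=
  dmtr_bounds_of_negative_regression_dependence_general μ Yd V C hYd hV hC hVunif hNRD
end
end
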